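/- In the Heisenberg group, the function u(x) = ((x1²+x2²)² + 16x3²)^(-1/2) satisfies Δ₂ u = X1X1u + X2X2u = 0 on ℝ³ \ {0}. -/

import Mathlib

noncomputable section

abbrev P3 : Type := ℝ × ℝ × ℝ

/-- Heisenberg vector field X1 = ∂/∂x1 - (x2/2) ∂/∂x3 (real-valued functions). -/
def X1r (u : P3 → ℝ) (p : P3) : ℝ :=
  fderiv ℝ u p (1, 0, 0) - p.2.1 / 2 * fderiv ℝ u p (0, 0, 1)

/-- Heisenberg vector field X2 = ∂/∂x2 + (x1/2) ∂/∂x3 (real-valued functions). -/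
def X2r (u : P3 → ℝ) (p : P3) : ℝ :=
  fderiv ℝ u p (0, 1, 0) + p.1 / 2 * fderiv ℝ u p (0, 0, 1)

/-!
Write `u = ρ ^ (-1/2)` with `ρ = (x₁² + x₂²)² + 16 x₃²` the fourth power of the Heisenberg gauge.
For any vector field `X` and exponent `a`, the chain and product rules give
`X (X ρᵃ) = a ρ^(a-1) X X ρ + a (a-1) ρ^(a-2) (X ρ)²`.
For `ρ` one computes `X₁X₁ρ + X₂X₂ρ = 24 |z|²` and `(X₁ρ)² + (X₂ρ)² = 16 |z|² ρ`, where
`|z|² = x₁² + x₂²`, so with `a = -1/2` the two contributions to `Δ₂ u` are `∓ 12 |z|² ρ^(-3/2)`.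
-/

open Filter Topology

namespace Heisenberg

section DerivAlong

variable {E : Type*} [NormedAddCommGroup E] [NormedSpace ℝ E]
  {V : E → E} {u v : E → ℝ} {x : E}

def derivAlong (V : E → E) (u : E → ℝ) (x : E) : ℝ :=
  fderiv ℝ u x (V x)

theorem derivAlong_congr_of_eventuallyEq (h : u =ᶠ[𝓝 x] v) :
    derivAlong V u x = derivAlong V v x := by
  rw [derivAlong, derivAlong, h.fderiv_eq]

theorem derivAlong_mul (hu : DifferentiableAt ℝ u x) (hv : DifferentiableAt ℝ v x) :
    derivAlong V (fun y => u y * v y) x = u x * derivAlong V v x + v x * derivAlong V u x := by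
  simp [derivAlong, fderiv_fun_mul hu hv]

theorem derivAlong_comp {φ : ℝ → ℝ} {φ' : ℝ} (hφ : HasDerivAt φ φ' (u x))
    (hu : DifferentiableAt ℝ u x) :
    derivAlong V (fun y => φ (u y)) x = φ' * derivAlong V u x := by
  show fderiv ℝ (φ ∘ u) x (V x) = _
  rw [(hφ.comp_hasFDerivAt x hu.hasFDerivAt).fderiv]
  simp [derivAlong]

theorem derivAlong_rpow_const (a : ℝ) (hu : DifferentiableAt ℝ u x) (hpos : 0 < u x) :
    derivAlong V (fun y => u y ^ a) x = a * u x ^ (a - 1) * derivAlong V u x :=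
  derivAlong_comp (Real.hasDerivAt_rpow_const (Or.inl hpos.ne')) hu

theorem derivAlong_derivAlong_rpow_const (a : ℝ) (hu : ∀ᶠ y in 𝓝 x, DifferentiableAt ℝ u y)
    (hVu : DifferentiableAt ℝ (derivAlong V u) x) (hpos : 0 < u x) :
    derivAlong V (derivAlong V fun y => u y ^ a) x =
      a * u x ^ (a - 1) * derivAlong V (derivAlong V u) x +
        a * (a - 1) * u x ^ (a - 2) * derivAlong V u x ^ 2 := by
  have hux : DifferentiableAt ℝ u x := hu.self_of_nhds
  have hfirst : derivAlong V (fun y => u y ^ a) =ᶠ[𝓝 x]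
      fun y => a * u y ^ (a - 1) * derivAlong V u y := by
    filter_upwards [hu, continuousAt_const.eventually_lt hux.continuousAt hpos] with y hy hy'
    exact derivAlong_rpow_const a hy hy'
  have hcoeff := (Real.hasDerivAt_rpow_const (p := a - 1) (Or.inl hpos.ne')).const_mul a
  rw [sub_sub, one_add_one_eq_two] at hcoeff
  rw [derivAlong_congr_of_eventuallyEq hfirst,
    derivAlong_mul ((hux.rpow_const (Or.inl hpos.ne')).const_mul a) hVu,
    derivAlong_comp hcoeff hux]
  ring

end DerivAlong

def horizontal1 (p : P3) : P3 := (1, 0, -(p.2.1 / 2))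

def horizontal2 (p : P3) : P3 := (0, 1, p.1 / 2)

theorem X1r_eq_derivAlong : X1r = derivAlong horizontal1 := by
  funext u p
  have : horizontal1 p = (1, 0, 0) - (p.2.1 / 2) • (0, 0, 1) := by simp [horizontal1]
  rw [X1r, derivAlong, this, map_sub, map_smul, smul_eq_mul]

theorem X2r_eq_derivAlong : X2r = derivAlong horizontal2 := by
  funext u p
  have : horizontal2 p = (0, 1, 0) + (p.1 / 2) • (0, 0, 1) := by simp [horizontal2]
  rw [X2r, derivAlong, this, map_add, map_smul, smul_eq_mul]

def gauge4 (p : P3) : ℝ := (p.1 ^ 2 + p.2.1 ^ 2) ^ 2 + 16 * p.2.2 ^ 2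

theorem gauge4_pos {p : P3} (hp : p ≠ 0) : 0 < gauge4 p := by
  obtain ⟨x, y, t⟩ := p
  have hxyt : x ≠ 0 ∨ y ≠ 0 ∨ t ≠ 0 := by
    simp only [ne_eq, Prod.ext_iff, Prod.fst_zero, Prod.snd_zero, not_and_or] at hp
    exact hp
  unfold gauge4
  rcases hxyt with h | h | h <;> positivity

theorem differentiable_gauge4 : Differentiable ℝ gauge4 := by
  unfold gauge4
  fun_prop

theorem fderiv_gauge4_apply (p v : P3) :
    fderiv ℝ gauge4 p v = 4 * (p.1 ^ 2 + p.2.1 ^ 2) * (p.1 * v.1 + p.2.1 * v.2.1) +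
      32 * p.2.2 * v.2.2 := by
  unfold gauge4
  simp (disch := fun_prop) only [fderiv_fun_add, fderiv_fun_mul, fderiv_fun_pow,
    fderiv_fun_const, fderiv.fst, fderiv.snd, fderiv_fun_id, ContinuousLinearMap.comp_id,
    ContinuousLinearMap.comp_apply, ContinuousLinearMap.coe_fst', ContinuousLinearMap.coe_snd',
    add_apply, smul_apply, Pi.zero_apply, zero_apply, smul_eq_mul]
  ring

theorem X1r_gauge4 :
    X1r gauge4 = fun p => 4 * p.1 * (p.1 ^ 2 + p.2.1 ^ 2) - 16 * p.2.1 * p.2.2 := by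
  funext p
  simp only [X1r, fderiv_gauge4_apply]
  ring

theorem X2r_gauge4 :
    X2r gauge4 = fun p => 4 * p.2.1 * (p.1 ^ 2 + p.2.1 ^ 2) + 16 * p.1 * p.2.2 := by
  funext p
  simp only [X2r, fderiv_gauge4_apply]
  ring

theorem X1r_X1r_gauge4 (p : P3) : X1r (X1r gauge4) p = 12 * (p.1 ^ 2 + p.2.1 ^ 2) := by
  simp (disch := fun_prop) only [X1r, X1r_gauge4, fderiv_fun_add, fderiv_fun_sub, fderiv_fun_mul,
    fderiv_fun_pow, fderiv_fun_const, fderiv.fst, fderiv.snd, fderiv_fun_id,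
    ContinuousLinearMap.comp_id, ContinuousLinearMap.comp_apply, ContinuousLinearMap.coe_fst', ContinuousLinearMap.coe_snd',
    add_apply, sub_apply, smul_apply, Pi.zero_apply, zero_apply, smul_eq_mul]
  ring

theorem X2r_X2r_gauge4 (p : P3) : X2r (X2r gauge4) p = 12 * (p.1 ^ 2 + p.2.1 ^ 2) := by
  simp (disch := fun_prop) only [X2r, X2r_gauge4, fderiv_fun_add, fderiv_fun_mul, fderiv_fun_pow,
    fderiv_fun_const, fderiv.fst, fderiv.snd, fderiv_fun_id, ContinuousLinearMap.comp_id,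
    ContinuousLinearMap.comp_apply, ContinuousLinearMap.coe_fst', ContinuousLinearMap.coe_snd',
    add_apply, smul_apply, Pi.zero_apply, zero_apply, smul_eq_mul]
  ring

theorem sq_X1r_gauge4_add_sq_X2r_gauge4 (p : P3) :
    X1r gauge4 p ^ 2 + X2r gauge4 p ^ 2 = 16 * (p.1 ^ 2 + p.2.1 ^ 2) * gauge4 p := by
  rw [X1r_gauge4, X2r_gauge4, gauge4]
  ring

end Heisenberg

open Heisenberg in
theorem heisenberg_2_harmonic (p : P3) (hp : p ≠ 0) :
    X1r (X1r fun r => ((r.1 ^ 2 + r.2.1 ^ 2) ^ 2 + 16 * r.2.2 ^ 2) ^ (-(1 : ℝ) / 2)) p +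
      X2r (X2r fun r => ((r.1 ^ 2 + r.2.1 ^ 2) ^ 2 + 16 * r.2.2 ^ 2) ^ (-(1 : ℝ) / 2)) p = 0 := by
  show X1r (X1r fun r => gauge4 r ^ (-(1 : ℝ) / 2)) p +
    X2r (X2r fun r => gauge4 r ^ (-(1 : ℝ) / 2)) p = 0
  have hpos := gauge4_pos hp
  have hdiff : ∀ᶠ q in 𝓝 p, DifferentiableAt ℝ gauge4 q :=
    Eventually.of_forall fun q => differentiable_gauge4 q
  have hdiff1 : DifferentiableAt ℝ (derivAlong horizontal1 gauge4) p := by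
    rw [← X1r_eq_derivAlong, X1r_gauge4]; fun_prop
  have hdiff2 : DifferentiableAt ℝ (derivAlong horizontal2 gauge4) p := by
    rw [← X2r_eq_derivAlong, X2r_gauge4]; fun_prop
  rw [X1r_eq_derivAlong, X2r_eq_derivAlong, derivAlong_derivAlong_rpow_const _ hdiff hdiff1 hpos,
    derivAlong_derivAlong_rpow_const _ hdiff hdiff2 hpos, ← X1r_eq_derivAlong,
    ← X2r_eq_derivAlong, X1r_X1r_gauge4, X2r_X2r_gauge4,
    show -(1 : ℝ) / 2 - 1 = (-(1 : ℝ) / 2 - 2) + 1 by norm_num, Real.rpow_add_one hpos.ne']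
  linear_combination (3 / 4 * gauge4 p ^ (-(1 : ℝ) / 2 - 2)) * sq_X1r_gauge4_add_sq_X2r_gauge4 p
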